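/- For every natural number n ≥ 1 and every λ ∈ k, the representation M_n(λ) of Q is indecomposable; moreover, for n, m ≥ 1 and λ, μ ∈ k, the representations M_n(λ) and M_m(μ) are isomorphic if and only if n = m and λ = μ. (This is the continuous one-parameter series of representations of the cyclic quiver Q used in the reduction for gentle algebras.) -/

import Mathlib

variable (k : Type) [Field k]

/-- A finite-dimensional representation of the quiver `Q` with vertices `1,2,3,4`
and arrows `a : 1 → 2`, `b : 1 → 3`, `c : 2 → 4`, `d : 3 → 4`. -/
structure QRep where
  V1 : Type
  V2 : Type
  V3 : Type
  V4 : Type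
  [acg1 : AddCommGroup V1]
  [acg2 : AddCommGroup V2]
  [acg3 : AddCommGroup V3]
  [acg4 : AddCommGroup V4]
  [mod1 : Module k V1]
  [mod2 : Module k V2]
  [mod3 : Module k V3]
  [mod4 : Module k V4]
  [fin1 : FiniteDimensional k V1]
  [fin2 : FiniteDimensional k V2]
  [fin3 : FiniteDimensional k V3]
  [fin4 : FiniteDimensional k V4]
  ma : V1 →ₗ[k] V2
  mb : V1 →ₗ[k] V3
  mc : V2 →ₗ[k] V4
  md : V3 →ₗ[k] V4

attribute [instance] QRep.acg1 QRep.acg2 QRep.acg3 QRep.acg4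
  QRep.mod1 QRep.mod2 QRep.mod3 QRep.mod4
  QRep.fin1 QRep.fin2 QRep.fin3 QRep.fin4

variable {k}

/-- Morphisms of representations of `Q`. -/
@[ext]
structure QHom (M N : QRep k) where
  f1 : M.V1 →ₗ[k] N.V1
  f2 : M.V2 →ₗ[k] N.V2
  f3 : M.V3 →ₗ[k] N.V3
  f4 : M.V4 →ₗ[k] N.V4
  comm_a : f2 ∘ₗ M.ma = N.ma ∘ₗ f1
  comm_b : f3 ∘ₗ M.mb = N.mb ∘ₗ f1
  comm_c : f4 ∘ₗ M.mc = N.mc ∘ₗ f2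
  comm_d : f4 ∘ₗ M.md = N.md ∘ₗ f3

/-- Two representations are isomorphic iff there is a morphism all of whose
components are bijective. -/
def QIso (M N : QRep k) : Prop :=
  ∃ f : QHom M N, Function.Bijective f.f1 ∧ Function.Bijective f.f2 ∧
    Function.Bijective f.f3 ∧ Function.Bijective f.f4

/-- The zero representation(s). -/
def QRep.IsZeroRep (M : QRep k) : Prop :=
  Subsingleton M.V1 ∧ Subsingleton M.V2 ∧ Subsingleton M.V3 ∧ Subsingleton M.V4

/-- Vertexwise direct sum of representations. -/
def QRep.dsum (M N : QRep k) : QRep k where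
  V1 := M.V1 × N.V1
  V2 := M.V2 × N.V2
  V3 := M.V3 × N.V3
  V4 := M.V4 × N.V4
  ma := M.ma.prodMap N.ma
  mb := M.mb.prodMap N.mb
  mc := M.mc.prodMap N.mc
  md := M.md.prodMap N.md

/-- Direct sum of `n` copies of a representation. -/
def QRep.dpow (M : QRep k) (n : ℕ) : QRep k where
  V1 := Fin n → M.V1
  V2 := Fin n → M.V2
  V3 := Fin n → M.V3
  V4 := Fin n → M.V4
  ma := M.ma.compLeft (Fin n)
  mb := M.mb.compLeft (Fin n)
  mc := M.mc.compLeft (Fin n)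
  md := M.md.compLeft (Fin n)

/-- A representation is indecomposable if it is nonzero and not isomorphic to a
direct sum of two nonzero representations. -/
def QRep.Indecomposable (M : QRep k) : Prop :=
  ¬ M.IsZeroRep ∧ ∀ A B : QRep k, QIso M (A.dsum B) → A.IsZeroRep ∨ B.IsZeroRep

/-- `0 → A → B → C → 0` is short exact (vertexwise). -/
def QShortExact {A B C : QRep k} (f : QHom A B) (g : QHom B C) : Prop :=
  (Function.Injective f.f1 ∧ Function.Injective f.f2 ∧
    Function.Injective f.f3 ∧ Function.Injective f.f4) ∧
  (Function.Surjective g.f1 ∧ Function.Surjective g.f2 ∧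
    Function.Surjective g.f3 ∧ Function.Surjective g.f4) ∧
  (LinearMap.range f.f1 = LinearMap.ker g.f1 ∧ LinearMap.range f.f2 = LinearMap.ker g.f2 ∧
    LinearMap.range f.f3 = LinearMap.ker g.f3 ∧ LinearMap.range f.f4 = LinearMap.ker g.f4)

variable (k)

/-- The `n×n` Jordan block with eigenvalue `lam`, as a linear endomorphism of `kⁿ`. -/
def jordan (n : ℕ) (lam : k) : (Fin n → k) →ₗ[k] (Fin n → k) :=
  Matrix.mulVecLin (Matrix.of fun i j : Fin n =>
    if i = j then lam else if (i : ℕ) + 1 = (j : ℕ) then 1 else 0)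

/-- The representation `M_n(λ) = (kⁿ,kⁿ,kⁿ,kⁿ; id,id,id,J_n(λ))`. -/
def Mlam (n : ℕ) (lam : k) : QRep k where
  V1 := Fin n → k
  V2 := Fin n → k
  V3 := Fin n → k
  V4 := Fin n → k
  ma := LinearMap.id
  mb := LinearMap.id
  mc := LinearMap.id
  md := jordan k n lam

/-- The indecomposable projective `P₁ = (k,k,k,k²)`. -/
def P1 : QRep k where
  V1 := k
  V2 := k
  V3 := k
  V4 := k × k
  ma := LinearMap.id
  mb := LinearMap.id
  mc := LinearMap.inl k k k
  md := LinearMap.inr k k k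

/-- The indecomposable projective `P₂ = (0,k,0,k)`. -/
def P2 : QRep k where
  V1 := Fin 0 → k
  V2 := k
  V3 := Fin 0 → k
  V4 := k
  ma := 0
  mb := 0
  mc := LinearMap.id
  md := 0

/-- The indecomposable projective `P₃ = (0,0,k,k)`. -/
def P3 : QRep k where
  V1 := Fin 0 → k
  V2 := Fin 0 → k
  V3 := k
  V4 := k
  ma := 0
  mb := 0
  mc := 0
  md := LinearMap.id

/-- The indecomposable projective `P₄ = (0,0,0,k)`. -/
def P4 : QRep k where
  V1 := Fin 0 → k
  V2 := Fin 0 → k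
  V3 := Fin 0 → k
  V4 := k
  ma := 0
  mb := 0
  mc := 0
  md := 0

/-!
An endomorphism of `M_n(λ)` is one linear map `u` of `kⁿ` used at all four vertices, and it
commutes with `J_n(λ)`, hence with the nilpotent shift `N = J_n(0)`, whose kernel is the line
`k e₀`. If `u` is idempotent and neither `0` nor `1`, then `range u` and `ker u` are nonzero and
`N`-stable, so each contains a nonzero vector killed by `N`, i.e. a nonzero multiple of `e₀`;
this is impossible since `range u ∩ ker u = 0`. A decomposition `M_n(λ) ≅ A ⊕ B` with `A, B ≠ 0`
would transport the projection onto `A` to such an idempotent.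

An isomorphism `M_n(λ) ≅ M_m(μ)` gives `n = m` by dimension count, and its vertex map sends
the eigenvector `e₀` of `J_n(λ)` to an eigenvector of `J_m(μ) = μ + N` with eigenvalue `λ`; as
`N` is nilpotent, `λ = μ`.
-/

section
variable {R V : Type*} [Semiring R] [AddCommMonoid V] [Module R V] {N p : Module.End R V}

theorem Module.End.exists_pow_apply_ne_zero_and_mem_ker (hN : IsNilpotent N) {w : V}
    (hw : w ≠ 0) : ∃ j, (N ^ j) w ≠ 0 ∧ (N ^ j) w ∈ LinearMap.ker N := by
  classical
  have hex : ∃ j, (N ^ j) w = 0 := by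
    obtain ⟨j, hj⟩ := hN
    exact ⟨j, by simp [hj]⟩
  obtain ⟨j, hj⟩ : ∃ j, Nat.find hex = j + 1 :=
    Nat.exists_eq_add_one_of_ne_zero fun h => hw (by simpa [h] using Nat.find_spec hex)
  refine ⟨j, Nat.find_min hex (by omega), ?_⟩
  rw [LinearMap.mem_ker, ← Module.End.mul_apply, ← pow_succ', ← hj]
  exact Nat.find_spec hex

theorem Module.End.exists_mem_ker_eigenvector_of_commute (hN : IsNilpotent N)
    (hpN : Commute p N) {w : V} (hw : w ≠ 0) {a : R} (hpw : p w = a • w) :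
    ∃ x ∈ LinearMap.ker N, x ≠ 0 ∧ p x = a • x := by
  obtain ⟨j, hj, hker⟩ := exists_pow_apply_ne_zero_and_mem_ker hN hw
  refine ⟨(N ^ j) w, hker, hj, ?_⟩
  rw [← Module.End.mul_apply, (hpN.pow_right j).eq, Module.End.mul_apply, hpw, map_smul]
end

section
variable {K V : Type*} [Field K] [AddCommGroup V] [Module K V] {N p : Module.End K V}

theorem Module.End.eq_zero_or_eq_one_of_isIdempotentElem_of_commute (hN : IsNilpotent N)
    {e : V} (hker : LinearMap.ker N ≤ K ∙ e) (hpN : Commute p N) (hp : IsIdempotentElem p) :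
    p = 0 ∨ p = 1 := by
  by_contra! h
  obtain ⟨v, hv⟩ : ∃ v, p v ≠ 0 := by
    by_contra! H; exact h.1 (LinearMap.ext H)
  obtain ⟨v', hv'⟩ : ∃ v', v' - p v' ≠ 0 := by
    by_contra! H; exact h.2 (LinearMap.ext fun v' => (sub_eq_zero.mp (H v')).symm)
  obtain ⟨x, hNx, hx, hpx⟩ := exists_mem_ker_eigenvector_of_commute hN hpN hv
    (a := 1) (by rw [one_smul, ← Module.End.mul_apply, hp.eq])
  obtain ⟨y, hNy, hy, hpy⟩ := exists_mem_ker_eigenvector_of_commute hN hpN hv'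
    (a := 0) (by rw [zero_smul, map_sub, ← Module.End.mul_apply, hp.eq, sub_self])
  obtain ⟨c, rfl⟩ := Submodule.mem_span_singleton.mp (hker hNx)
  obtain ⟨d, rfl⟩ := Submodule.mem_span_singleton.mp (hker hNy)
  have hc : c ≠ 0 := by rintro rfl; simp at hx
  have hpe : p e = e := by
    rw [map_smul, one_smul] at hpx
    exact smul_right_injective V hc hpx
  rw [map_smul, hpe, zero_smul] at hpy
  exact hy hpy
end

theorem LinearEquiv.symm_comp_eq_comp_symm {R V₁ V₂ W₁ W₂ : Type*} [Semiring R]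
    [AddCommMonoid V₁] [Module R V₁] [AddCommMonoid V₂] [Module R V₂] [AddCommMonoid W₁]
    [Module R W₁] [AddCommMonoid W₂] [Module R W₂] (e₁ : V₁ ≃ₗ[R] W₁) (e₂ : V₂ ≃ₗ[R] W₂)
    {g : V₁ →ₗ[R] V₂} {h : W₁ →ₗ[R] W₂} (H : e₂.toLinearMap ∘ₗ g = h ∘ₗ e₁.toLinearMap) :
    e₂.symm.toLinearMap ∘ₗ h = g ∘ₗ e₁.symm.toLinearMap := by
  ext x
  apply e₂.injective
  simpa using (LinearMap.congr_fun H (e₁.symm x)).symm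

theorem LinearMap.subsingleton_of_inl_comp_fst_eq_zero {R W₁ W₂ : Type*} [Semiring R]
    [AddCommMonoid W₁] [Module R W₁] [AddCommMonoid W₂] [Module R W₂]
    (h : inl R W₁ W₂ ∘ₗ fst R W₁ W₂ = 0) : Subsingleton W₁ :=
  subsingleton_of_forall_eq 0 fun a => congrArg Prod.fst (LinearMap.congr_fun h (a, 0))

theorem LinearMap.subsingleton_of_inl_comp_fst_eq_id {R W₁ W₂ : Type*} [Semiring R]
    [AddCommMonoid W₁] [Module R W₁] [AddCommMonoid W₂] [Module R W₂]
    (h : inl R W₁ W₂ ∘ₗ fst R W₁ W₂ = id) : Subsingleton W₂ :=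
  subsingleton_of_forall_eq 0 fun b => (congrArg Prod.snd (LinearMap.congr_fun h (0, b))).symm

variable {k}

theorem jordan_eq_smul_one_add (n : ℕ) (lam : k) :
    jordan k n lam = lam • 1 + jordan k n 0 := by
  refine LinearMap.ext fun v => funext fun i => ?_
  simp only [jordan, Matrix.mulVecLin_apply, Matrix.mulVec, dotProduct, Matrix.of_apply,
    LinearMap.add_apply, LinearMap.smul_apply, Module.End.one_apply, Pi.add_apply,
    Pi.smul_apply, smul_eq_mul]
  rw [← Fintype.sum_ite_eq i v, Finset.mul_sum, ← Finset.sum_add_distrib]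
  refine Finset.sum_congr rfl fun j _ => ?_
  split_ifs <;> simp_all

theorem isNilpotent_jordan_zero (n : ℕ) : IsNilpotent (jordan k n 0) := by
  set A : Matrix (Fin n) (Fin n) k :=
    Matrix.of fun i j => if i = j then 0 else if (i : ℕ) + 1 = j then 1 else 0
  have hA : A.IsUpperTriangular := fun i j hij => by
    have hji : (j : ℕ) < i := Fin.lt_def.mp hij
    have : ¬ ((i : ℕ) + 1 = j) := by omega
    simp [A, this]
  have hchar : A.charpoly = Polynomial.X ^ n := by
    simp [Matrix.charpoly_of_isUpperTriangular A hA, A]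
  have : IsNilpotent A := ⟨n, by simpa [hchar] using A.aeval_self_charpoly⟩
  rw [← Matrix.isNilpotent_toLin'_iff] at this
  exact this

theorem jordan_zero_apply {n : ℕ} (v : Fin n → k) (i : Fin n) :
    jordan k n 0 v i = ∑ j : Fin n, if (i : ℕ) + 1 = j then v j else 0 := by
  simp only [jordan, Matrix.mulVecLin_apply, Matrix.mulVec, dotProduct, Matrix.of_apply]
  refine Finset.sum_congr rfl fun j _ => ?_
  split_ifs <;> simp_all

theorem jordan_zero_apply_castSucc {n : ℕ} (v : Fin (n + 1) → k) (i : Fin n) :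
    jordan k (n + 1) 0 v i.castSucc = v i.succ := by
  rw [jordan_zero_apply, Fintype.sum_eq_single i.succ]
  · simp
  · intro j hj
    rw [if_neg]
    exact fun h => hj (Fin.ext (by simp [← h]))

theorem jordan_zero_single_zero (n : ℕ) : jordan k (n + 1) 0 (Pi.single 0 1) = 0 := by
  ext i
  rw [jordan_zero_apply]
  refine Finset.sum_eq_zero fun j _ => ?_
  split_ifs with h
  · exact Pi.single_eq_of_ne (fun h' => by simp [h'] at h) _
  · rfl

theorem ker_jordan_zero_le_span_single (n : ℕ) :
    LinearMap.ker (jordan k (n + 1) 0) ≤ k ∙ Pi.single 0 1 := by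
  intro v hv
  refine Submodule.mem_span_singleton.mpr ⟨v 0, funext fun i => ?_⟩
  cases i using Fin.cases with
  | zero => simp
  | succ j =>
    rw [← jordan_zero_apply_castSucc v j, LinearMap.mem_ker.mp hv]
    simp

theorem jordan_single_zero (n : ℕ) (lam : k) :
    jordan k (n + 1) lam (Pi.single 0 1) = lam • Pi.single 0 1 := by
  rw [jordan_eq_smul_one_add, LinearMap.add_apply, jordan_zero_single_zero, add_zero]
  rfl

theorem eq_of_injective_comp_jordan {n m : ℕ} {lam mu : k}
    (f : (Fin (n + 1) → k) →ₗ[k] (Fin m → k)) (hf : Function.Injective f)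
    (h : f ∘ₗ jordan k (n + 1) lam = jordan k m mu ∘ₗ f) : lam = mu := by
  set x := f (Pi.single 0 1)
  have hx : x ≠ 0 := by
    rw [← map_zero f]
    exact hf.ne (by simp)
  have hJx : jordan k m 0 x = (lam - mu) • x := by
    have := LinearMap.congr_fun h (Pi.single 0 1)
    simp only [LinearMap.comp_apply, jordan_single_zero, map_smul] at this
    rw [sub_smul, this, jordan_eq_smul_one_add m mu]
    exact (add_sub_cancel_left _ _).symm
  have hev : Module.End.HasEigenvalue (jordan k m 0) (lam - mu) :=
    Module.End.hasEigenvalue_of_hasEigenvector ⟨Module.End.mem_eigenspace_iff.mpr hJx, hx⟩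
  exact sub_eq_zero.mp ((hev.isNilpotent_of_isNilpotent (isNilpotent_jordan_zero m)).eq_zero)

theorem commute_jordan_zero_of_commute_jordan {n : ℕ} {lam : k} {u : Module.End k (Fin n → k)}
    (h : Commute u (jordan k n lam)) : Commute u (jordan k n 0) := by
  have h' := h.sub_right ((Commute.one_right u).smul_right lam)
  rwa [jordan_eq_smul_one_add, add_sub_cancel_left] at h'

namespace QHom

variable {M N P : QRep k}

protected def id (M : QRep k) : QHom M M :=
  ⟨LinearMap.id, LinearMap.id, LinearMap.id, LinearMap.id, rfl, rfl, rfl, rfl⟩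

def comp (g : QHom N P) (f : QHom M N) : QHom M P where
  f1 := g.f1 ∘ₗ f.f1
  f2 := g.f2 ∘ₗ f.f2
  f3 := g.f3 ∘ₗ f.f3
  f4 := g.f4 ∘ₗ f.f4
  comm_a := by rw [LinearMap.comp_assoc, f.comm_a, ← LinearMap.comp_assoc, g.comm_a]; rfl
  comm_b := by rw [LinearMap.comp_assoc, f.comm_b, ← LinearMap.comp_assoc, g.comm_b]; rfl
  comm_c := by rw [LinearMap.comp_assoc, f.comm_c, ← LinearMap.comp_assoc, g.comm_c]; rfl
  comm_d := by rw [LinearMap.comp_assoc, f.comm_d, ← LinearMap.comp_assoc, g.comm_d]; rfl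

instance : Zero (QHom M N) :=
  ⟨⟨0, 0, 0, 0, by simp, by simp, by simp, by simp⟩⟩

theorem zero_comp (f : QHom M N) : (0 : QHom N P).comp f = 0 := by
  ext <;> rfl

theorem comp_zero (g : QHom N P) : g.comp (0 : QHom M N) = 0 := by
  ext
  exacts [map_zero g.f1, map_zero g.f2, map_zero g.f3, map_zero g.f4]

noncomputable def invOfBijective (f : QHom M N) (h1 : Function.Bijective f.f1)
    (h2 : Function.Bijective f.f2) (h3 : Function.Bijective f.f3)
    (h4 : Function.Bijective f.f4) : QHom N M where
  f1 := (LinearEquiv.ofBijective f.f1 h1).symm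
  f2 := (LinearEquiv.ofBijective f.f2 h2).symm
  f3 := (LinearEquiv.ofBijective f.f3 h3).symm
  f4 := (LinearEquiv.ofBijective f.f4 h4).symm
  comm_a := LinearEquiv.symm_comp_eq_comp_symm _ _ f.comm_a
  comm_b := LinearEquiv.symm_comp_eq_comp_symm _ _ f.comm_b
  comm_c := LinearEquiv.symm_comp_eq_comp_symm _ _ f.comm_c
  comm_d := LinearEquiv.symm_comp_eq_comp_symm _ _ f.comm_d

end QHom

def QRep.projFst (A B : QRep k) : QHom (A.dsum B) (A.dsum B) where
  f1 := LinearMap.inl k _ _ ∘ₗ LinearMap.fst k _ _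
  f2 := LinearMap.inl k _ _ ∘ₗ LinearMap.fst k _ _
  f3 := LinearMap.inl k _ _ ∘ₗ LinearMap.fst k _ _
  f4 := LinearMap.inl k _ _ ∘ₗ LinearMap.fst k _ _
  comm_a := LinearMap.ext fun _ => Prod.ext rfl (map_zero B.ma).symm
  comm_b := LinearMap.ext fun _ => Prod.ext rfl (map_zero B.mb).symm
  comm_c := LinearMap.ext fun _ => Prod.ext rfl (map_zero B.mc).symm
  comm_d := LinearMap.ext fun _ => Prod.ext rfl (map_zero B.md).symm

theorem QRep.isZeroRep_of_projFst_eq_zero {A B : QRep k} (h : A.projFst B = 0) :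
    A.IsZeroRep :=
  ⟨LinearMap.subsingleton_of_inl_comp_fst_eq_zero (congrArg QHom.f1 h),
    LinearMap.subsingleton_of_inl_comp_fst_eq_zero (congrArg QHom.f2 h),
    LinearMap.subsingleton_of_inl_comp_fst_eq_zero (congrArg QHom.f3 h),
    LinearMap.subsingleton_of_inl_comp_fst_eq_zero (congrArg QHom.f4 h)⟩

theorem QRep.isZeroRep_of_projFst_eq_id {A B : QRep k} (h : A.projFst B = QHom.id _) :
    B.IsZeroRep :=
  ⟨LinearMap.subsingleton_of_inl_comp_fst_eq_id (congrArg QHom.f1 h),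
    LinearMap.subsingleton_of_inl_comp_fst_eq_id (congrArg QHom.f2 h),
    LinearMap.subsingleton_of_inl_comp_fst_eq_id (congrArg QHom.f3 h),
    LinearMap.subsingleton_of_inl_comp_fst_eq_id (congrArg QHom.f4 h)⟩

theorem QRep.indecomposable_of_forall_idempotent {M : QRep k} (hM : ¬ M.IsZeroRep)
    (h : ∀ e : QHom M M, e.comp e = e → e = 0 ∨ e = QHom.id M) : M.Indecomposable := by
  refine ⟨hM, fun A B ⟨f, h1, h2, h3, h4⟩ => ?_⟩
  set g := f.invOfBijective h1 h2 h3 h4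
  have hfg : f.comp g = QHom.id _ := by
    ext <;> simp [g, QHom.comp, QHom.invOfBijective, QHom.id]
  have hconj : ∀ p, f.comp ((g.comp (p.comp f)).comp g) = p := by
    intro p
    ext <;> simp [g, QHom.comp, QHom.invOfBijective]
  have hidem : (g.comp ((A.projFst B).comp f)).comp (g.comp ((A.projFst B).comp f)) =
      g.comp ((A.projFst B).comp f) := by
    ext <;> simp [g, QHom.comp, QHom.invOfBijective] <;> rfl
  rcases h _ hidem with he | he
  · refine Or.inl (QRep.isZeroRep_of_projFst_eq_zero (B := B) ?_)
    rw [← hconj (A.projFst B), he, QHom.zero_comp, QHom.comp_zero]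
  · refine Or.inr (QRep.isZeroRep_of_projFst_eq_id (A := A) ?_)
    rw [← hconj (A.projFst B), he, ← hfg]
    rfl

namespace QHom

variable {n m : ℕ} {lam mu : k}

theorem f2_eq_f1_of_mlam (f : QHom (Mlam k n lam) (Mlam k m mu)) : f.f2 = f.f1 := f.comm_a

theorem f3_eq_f1_of_mlam (f : QHom (Mlam k n lam) (Mlam k m mu)) : f.f3 = f.f1 := f.comm_b

theorem f4_eq_f1_of_mlam (f : QHom (Mlam k n lam) (Mlam k m mu)) : f.f4 = f.f1 :=
  f.comm_c.trans f.comm_a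

theorem f1_comp_jordan (f : QHom (Mlam k n lam) (Mlam k m mu)) :
    (f.f1 : (Fin n → k) →ₗ[k] (Fin m → k)) ∘ₗ jordan k n lam = jordan k m mu ∘ₗ f.f1 := by
  have := f.comm_d
  rwa [f4_eq_f1_of_mlam, f3_eq_f1_of_mlam] at this

theorem ext_of_mlam {f g : QHom (Mlam k n lam) (Mlam k m mu)} (h : f.f1 = g.f1) : f = g := by
  ext1
  · exact h
  · rw [f2_eq_f1_of_mlam, f2_eq_f1_of_mlam, h]
  · rw [f3_eq_f1_of_mlam, f3_eq_f1_of_mlam, h]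
  · rw [f4_eq_f1_of_mlam, f4_eq_f1_of_mlam, h]

end QHom

theorem mlam_indecomposable (n : ℕ) (lam : k) : (Mlam k (n + 1) lam).Indecomposable := by
  refine QRep.indecomposable_of_forall_idempotent
    (fun h => not_subsingleton (Fin (n + 1) → k) h.1) fun e he => ?_
  have hcomm : Commute (e.f1 : Module.End k (Fin (n + 1) → k)) (jordan k (n + 1) lam) :=
    e.f1_comp_jordan
  have hid : IsIdempotentElem (e.f1 : Module.End k (Fin (n + 1) → k)) := congrArg QHom.f1 he
  obtain h | h := Module.End.eq_zero_or_eq_one_of_isIdempotentElem_of_commute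
    (isNilpotent_jordan_zero (k := k) (n + 1)) (ker_jordan_zero_le_span_single n)
    (commute_jordan_zero_of_commute_jordan hcomm) hid
  · exact Or.inl (QHom.ext_of_mlam h)
  · exact Or.inr (QHom.ext_of_mlam h)

theorem mlam_qIso_iff (n m : ℕ) (lam mu : k) :
    QIso (Mlam k (n + 1) lam) (Mlam k m mu) ↔ n + 1 = m ∧ lam = mu := by
  constructor
  · rintro ⟨f, h1, -, -, -⟩
    have hdim : Module.finrank k (Fin (n + 1) → k) = Module.finrank k (Fin m → k) :=
      LinearEquiv.finrank_eq (LinearEquiv.ofBijective f.f1 h1)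
    rw [Module.finrank_fin_fun, Module.finrank_fin_fun] at hdim
    exact ⟨hdim, eq_of_injective_comp_jordan f.f1 h1.injective f.f1_comp_jordan⟩
  · rintro ⟨rfl, rfl⟩
    exact ⟨QHom.id _, Function.bijective_id, Function.bijective_id, Function.bijective_id,
      Function.bijective_id⟩

/-- For every `n ≥ 1` and `λ ∈ k` the representation `M_n(λ)` of `Q`
is indecomposable, and `M_n(λ) ≅ M_m(μ)` iff `n = m` and `λ = μ`. -/
theorem stmt0 (k : Type) [Field k] :
    (∀ (n : ℕ), 1 ≤ n → ∀ lam : k, (Mlam k n lam).Indecomposable) ∧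
    (∀ (n m : ℕ), 1 ≤ n → 1 ≤ m → ∀ lam mu : k,
      (QIso (Mlam k n lam) (Mlam k m mu) ↔ n = m ∧ lam = mu)) := by
  refine ⟨fun n hn lam => ?_, fun n m hn _ lam mu => ?_⟩
  · obtain ⟨n, rfl⟩ := Nat.exists_eq_add_of_le' hn
    exact mlam_indecomposable n lam
  · obtain ⟨n, rfl⟩ := Nat.exists_eq_add_of_le' hn
    exact mlam_qIso_iff n m lam mu
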